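/- Fix ℓ₁, ℓ₂ ∈ [2,∞) and a bounded sequence of positive integers (a_n) with a := sup_n a_n < ∞. Then every entry of every matrix product Ā^{∘n} := Ā(n)Ā(n−2)⋯Ā(4) is uniformly bounded above by max{ℓ₁/ℓ₂, ℓ₂/ℓ₁}. -/

import Mathlib

noncomputable section

/-- `tᵢ(j) = (1 - ℓᵢ^{-j}) / (ℓᵢ - 1)`. -/
noncomputable def tfun (ℓ : ℝ) (j : ℕ) : ℝ := (1 - (ℓ ^ j)⁻¹) / (ℓ - 1)

/-- The matrices `A(2n) = [[(ℓ₂/ℓ₁)·t₂(a_{2n}), ℓ₁^{-a_{2n-1}}], [1, 0]]` and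
`A(2n+1) = [[(ℓ₁/ℓ₂)·t₁(a_{2n+1}), ℓ₂^{-a_{2n}}], [1, 0]]`. -/
noncomputable def Amat (ℓ₁ ℓ₂ : ℝ) (a : ℕ → ℕ) (n : ℕ) : Matrix (Fin 2) (Fin 2) ℝ :=
  if Even n then !![ℓ₂ / ℓ₁ * tfun ℓ₂ (a n), (ℓ₁ ^ a (n - 1))⁻¹; 1, 0]
  else !![ℓ₁ / ℓ₂ * tfun ℓ₁ (a n), (ℓ₂ ^ a (n - 1))⁻¹; 1, 0]

/-- `Ā(n) = A(n)·A(n-1)`. -/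
noncomputable def Abar (ℓ₁ ℓ₂ : ℝ) (a : ℕ → ℕ) (n : ℕ) : Matrix (Fin 2) (Fin 2) ℝ :=
  Amat ℓ₁ ℓ₂ a n * Amat ℓ₁ ℓ₂ a (n - 1)

/-- The ordered product `Ā^{∘n} = Ā(n)·Ā(n-2)·⋯·Ā(4)` over every other index down to 4. -/
noncomputable def AbarProd (ℓ₁ ℓ₂ : ℝ) (a : ℕ → ℕ) (n : ℕ) : Matrix (Fin 2) (Fin 2) ℝ :=
  ((List.range (n / 2 - 1)).map fun j => Abar ℓ₁ ℓ₂ a (n - 2 * j)).prod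

/-! Conjugating by `D_m = diag(ℓ(m), ℓ(m+1))`, where `ℓ(m)` is `ℓ₂` for even and `ℓ₁` for odd `m`,
turns `A(m+1)` into `B(m) = [[t_{ℓ(m+1)}(a_{m+1}), ℓ(m)^{-a_m}], [1, 0]]`; as `D` has period two,
`Ā^{∘n} D_n = D_n (B̄ ⋯ B̄)`. Each entry of `Ā^{∘n}` is therefore `ℓ(n+i)/ℓ(n+j)` times an entry of
a product of `B`'s, and those lie in `[0,1]`: the columns `(u, v)` of such products stay in the
region `u, v ≥ 0`, `v ≤ 1`, `u + (ℓ(m) - 1) ℓ(m)^{-a_m} v ≤ 1`, which `B(m)` maps into the region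
at `m + 1` because `t_ℓ(k) + (ℓ - 1) ℓ^{-k} ≤ 1` for `ℓ ≥ 2`, `k ≥ 1`. -/

open Matrix

theorem SemiconjBy.list_prod_map {M ι : Type*} [Monoid M] {d : M} {f g : ι → M} (l : List ι)
    (h : ∀ x ∈ l, SemiconjBy d (f x) (g x)) :
    SemiconjBy d (l.map f).prod (l.map g).prod := by
  induction l with
  | nil => exact SemiconjBy.one_right d
  | cons x l ih =>
    simp only [List.map_cons, List.prod_cons]
    exact (h x List.mem_cons_self).mul_right (ih fun y hy => h y (List.mem_cons_of_mem x hy))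

theorem Matrix.apply_le_div_of_mul_diagonal_eq {ι : Type*} [Fintype ι] [DecidableEq ι]
    {P Q : Matrix ι ι ℝ} {d : ι → ℝ} (h : P * diagonal d = diagonal d * Q)
    (hd : ∀ i, 0 < d i) {i j : ι} (hQ : Q i j ≤ 1) : P i j ≤ d i / d j := by
  have hij := congrFun (congrFun h i) j
  rw [mul_diagonal, diagonal_mul] at hij
  rw [le_div_iff₀ (hd j), hij]
  exact mul_le_of_le_one_right (hd i).le hQ

theorem tfun_nonneg {L : ℝ} (hL : 1 ≤ L) (k : ℕ) : 0 ≤ tfun L k :=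
  div_nonneg (sub_nonneg.mpr (inv_le_one_of_one_le₀ (one_le_pow₀ hL))) (sub_nonneg.mpr hL)

theorem tfun_add_sub_one_mul_inv_pow_le_one {L : ℝ} (hL : 2 ≤ L) {k : ℕ} (hk : 1 ≤ k) :
    tfun L k + (L - 1) * (L ^ k)⁻¹ ≤ 1 := by
  have hLk : L ≤ L ^ k := le_self_pow₀ (by linarith) (by omega)
  set q := (L ^ k)⁻¹
  have hqL : q * L ≤ 1 := by rw [inv_mul_le_iff₀ (by positivity), mul_one]; exact hLk
  rw [tfun, div_add' _ _ _ (by linarith), div_le_one (by linarith)]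
  nlinarith [mul_nonneg (by linarith : (0:ℝ) ≤ L - 2) (by linarith : (0:ℝ) ≤ 1 - q * L)]

section Scaled

variable (L : ℕ → ℝ) (a : ℕ → ℕ)

def stepMat (m : ℕ) : Matrix (Fin 2) (Fin 2) ℝ :=
  !![tfun (L (m + 1)) (a (m + 1)), (L m ^ a m)⁻¹; 1, 0]

def twoStepMat (m : ℕ) : Matrix (Fin 2) (Fin 2) ℝ :=
  stepMat L a (m + 1) * stepMat L a m

def trapRegion (m : ℕ) : Set (Fin 2 → ℝ) :=
  {v | 0 ≤ v 0 ∧ 0 ≤ v 1 ∧ v 0 + (L m - 1) * (L m ^ a m)⁻¹ * v 1 ≤ 1 ∧ v 1 ≤ 1}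

variable {L a}

theorem single_mem_trapRegion {m : ℕ} (hL : 2 ≤ L m) (ha : 1 ≤ a m) (j : Fin 2) :
    Pi.single j 1 ∈ trapRegion L a m := by
  have hq : (L m - 1) * (L m ^ a m)⁻¹ ≤ 1 := by
    linarith [tfun_add_sub_one_mul_inv_pow_le_one hL ha, tfun_nonneg (by linarith) (a m)]
  fin_cases j <;> simp [trapRegion, hq]

theorem stepMat_mulVec (m : ℕ) (v : Fin 2 → ℝ) :
    stepMat L a m *ᵥ v = ![tfun (L (m + 1)) (a (m + 1)) * v 0 + (L m ^ a m)⁻¹ * v 1, v 0] := by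
  ext i; fin_cases i <;> simp [stepMat, mulVec, vecHead, vecTail]

theorem stepMat_mulVec_mem_trapRegion (hL : ∀ m, 2 ≤ L m) (ha : ∀ m, 1 ≤ a m) {m : ℕ}
    {v : Fin 2 → ℝ} (hv : v ∈ trapRegion L a m) :
    stepMat L a m *ᵥ v ∈ trapRegion L a (m + 1) := by
  obtain ⟨hv₀, hv₁, hsum, hv₁_le⟩ := hv
  have htq := tfun_add_sub_one_mul_inv_pow_le_one (hL (m + 1)) (ha (m + 1))
  set t := tfun (L (m + 1)) (a (m + 1))
  set q := (L m ^ a m)⁻¹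
  have ht : 0 ≤ t := tfun_nonneg (by linarith [hL (m + 1)]) _
  have hqv : 0 ≤ q * v 1 := mul_nonneg (by have := hL m; positivity) hv₁
  have hqv_le : q * v 1 ≤ (L m - 1) * q * v 1 := by
    nlinarith [mul_nonneg (sub_nonneg.mpr (hL m)) hqv]
  rw [stepMat_mulVec]
  simp only [trapRegion, Set.mem_ofPred_eq, cons_val_zero, cons_val_one]
  refine ⟨by positivity, hv₀, ?_, by linarith⟩
  nlinarith [mul_le_mul_of_nonneg_right htq hv₀]

theorem twoStepMat_mulVec_mem_trapRegion (hL : ∀ m, 2 ≤ L m) (ha : ∀ m, 1 ≤ a m) {m : ℕ}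
    {v : Fin 2 → ℝ} (hv : v ∈ trapRegion L a m) :
    twoStepMat L a m *ᵥ v ∈ trapRegion L a (m + 2) := by
  rw [twoStepMat, ← mulVec_mulVec]
  exact stepMat_mulVec_mem_trapRegion hL ha (stepMat_mulVec_mem_trapRegion hL ha hv)

theorem prod_twoStepMat_mulVec_mem_trapRegion (hL : ∀ m, 2 ≤ L m) (ha : ∀ m, 1 ≤ a m)
    {n c : ℕ} (hc : 2 * c ≤ n) {v : Fin 2 → ℝ} (hv : v ∈ trapRegion L a (n - 2 * c)) :
    ((List.range c).map fun j => twoStepMat L a (n - 2 - 2 * j)).prod *ᵥ v ∈ trapRegion L a n := by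
  induction c generalizing v with
  | zero => simpa using hv
  | succ c ih =>
    rw [List.prod_range_succ, ← mulVec_mulVec]
    refine ih (by omega) ?_
    rw [show n - 2 - 2 * c = n - 2 * (c + 1) by omega]
    simpa [show n - 2 * (c + 1) + 2 = n - 2 * c by omega] using
      twoStepMat_mulVec_mem_trapRegion hL ha hv

theorem mem_trapRegion_le_one {m : ℕ} {v : Fin 2 → ℝ} (hL : 1 ≤ L m) (hv : v ∈ trapRegion L a m)
    (i : Fin 2) : v i ≤ 1 := by
  obtain ⟨-, hv₁, hsum, hv₁_le⟩ := hv
  have hL' : 0 ≤ L m - 1 := by linarith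
  have : 0 ≤ (L m - 1) * (L m ^ a m)⁻¹ * v 1 := by positivity
  fin_cases i
  · simp only [Fin.zero_eta]; linarith
  · exact hv₁_le

end Scaled

section Alternating

variable {ℓ₁ ℓ₂ : ℝ}

def ellAt (ℓ₁ ℓ₂ : ℝ) (m : ℕ) : ℝ := if Even m then ℓ₂ else ℓ₁

def scaling (ℓ₁ ℓ₂ : ℝ) (m : ℕ) : Matrix (Fin 2) (Fin 2) ℝ :=
  diagonal ![ellAt ℓ₁ ℓ₂ m, ellAt ℓ₁ ℓ₂ (m + 1)]

theorem ellAt_add_two_mul (m k : ℕ) : ellAt ℓ₁ ℓ₂ (m + 2 * k) = ellAt ℓ₁ ℓ₂ m := by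
  simp [ellAt, Nat.even_add]

theorem scaling_add_two_mul (m k : ℕ) : scaling ℓ₁ ℓ₂ (m + 2 * k) = scaling ℓ₁ ℓ₂ m := by
  rw [scaling, scaling, ellAt_add_two_mul, add_right_comm, ellAt_add_two_mul]

theorem Amat_succ_mul_scaling (h₁ : ℓ₁ ≠ 0) (h₂ : ℓ₂ ≠ 0) (a : ℕ → ℕ) (m : ℕ) :
    Amat ℓ₁ ℓ₂ a (m + 1) * scaling ℓ₁ ℓ₂ m = scaling ℓ₁ ℓ₂ (m + 1) * stepMat (ellAt ℓ₁ ℓ₂) a m := by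
  by_cases hm : Even m <;>
  · ext i j
    fin_cases i <;> fin_cases j <;>
      simp [Amat, scaling, stepMat, ellAt, hm, Nat.even_add_one] <;> field_simp

theorem Abar_add_two_mul_scaling (h₁ : ℓ₁ ≠ 0) (h₂ : ℓ₂ ≠ 0) (a : ℕ → ℕ) (m : ℕ) :
    Abar ℓ₁ ℓ₂ a (m + 2) * scaling ℓ₁ ℓ₂ m = scaling ℓ₁ ℓ₂ m * twoStepMat (ellAt ℓ₁ ℓ₂) a m := by
  calc Abar ℓ₁ ℓ₂ a (m + 2) * scaling ℓ₁ ℓ₂ m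
      = Amat ℓ₁ ℓ₂ a (m + 1 + 1) * (Amat ℓ₁ ℓ₂ a (m + 1) * scaling ℓ₁ ℓ₂ m) := by
        rw [Abar, mul_assoc]; rfl
    _ = scaling ℓ₁ ℓ₂ (m + 2 * 1) * twoStepMat (ellAt ℓ₁ ℓ₂) a m := by
        rw [Amat_succ_mul_scaling h₁ h₂, ← mul_assoc, Amat_succ_mul_scaling h₁ h₂,
          mul_assoc, twoStepMat]
    _ = scaling ℓ₁ ℓ₂ m * twoStepMat (ellAt ℓ₁ ℓ₂) a m := by rw [scaling_add_two_mul]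

theorem AbarProd_mul_scaling (h₁ : ℓ₁ ≠ 0) (h₂ : ℓ₂ ≠ 0) (a : ℕ → ℕ) (n : ℕ) :
    AbarProd ℓ₁ ℓ₂ a n * scaling ℓ₁ ℓ₂ n = scaling ℓ₁ ℓ₂ n *
      ((List.range (n / 2 - 1)).map fun j => twoStepMat (ellAt ℓ₁ ℓ₂) a (n - 2 - 2 * j)).prod := by
  refine (SemiconjBy.list_prod_map _ fun j hj => ?_).eq.symm
  have hn : n = n - 2 - 2 * j + 2 * (j + 1) := by rw [List.mem_range] at hj; omega
  have hAbar := Abar_add_two_mul_scaling h₁ h₂ a (n - 2 - 2 * j)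
  rw [← scaling_add_two_mul (n - 2 - 2 * j) (j + 1), ← hn,
    show n - 2 - 2 * j + 2 = n - 2 * j by omega] at hAbar
  exact hAbar.symm

theorem ellAt_div_ellAt_le (h₁ : 0 < ℓ₁) (h₂ : 0 < ℓ₂) (m k : ℕ) :
    ellAt ℓ₁ ℓ₂ m / ellAt ℓ₁ ℓ₂ k ≤ max (ℓ₁ / ℓ₂) (ℓ₂ / ℓ₁) := by
  have one_le : 1 ≤ max (ℓ₁ / ℓ₂) (ℓ₂ / ℓ₁) := by
    rcases le_total ℓ₁ ℓ₂ with h | h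
    · exact le_max_of_le_right ((one_le_div h₁).mpr h)
    · exact le_max_of_le_left ((one_le_div h₂).mpr h)
  unfold ellAt
  split_ifs <;> simp_all [div_self, h₁.ne', h₂.ne']

end Alternating

theorem abar_prod_entries_bounded_general (ℓ₁ ℓ₂ : ℝ) (h₁ : 2 ≤ ℓ₁) (h₂ : 2 ≤ ℓ₂)
    (a : ℕ → ℕ) (ha_pos : ∀ n, 1 ≤ a n) :
    ∀ n : ℕ, ∀ i j : Fin 2, AbarProd ℓ₁ ℓ₂ a n i j ≤ max (ℓ₁ / ℓ₂) (ℓ₂ / ℓ₁) := by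
  intro n i j
  have hℓ (m : ℕ) : 2 ≤ ellAt ℓ₁ ℓ₂ m := by unfold ellAt; split_ifs <;> assumption
  have hℓ_pos (m : ℕ) : 0 < ellAt ℓ₁ ℓ₂ m := by linarith [hℓ m]
  have hQ := prod_twoStepMat_mulVec_mem_trapRegion hℓ ha_pos (show 2 * (n / 2 - 1) ≤ n by omega)
    (single_mem_trapRegion (hℓ _) (ha_pos _) j)
  rw [mulVec_single_one] at hQ
  calc AbarProd ℓ₁ ℓ₂ a n i j
      ≤ ![ellAt ℓ₁ ℓ₂ n, ellAt ℓ₁ ℓ₂ (n + 1)] i / ![ellAt ℓ₁ ℓ₂ n, ellAt ℓ₁ ℓ₂ (n + 1)] j :=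
        Matrix.apply_le_div_of_mul_diagonal_eq
          (AbarProd_mul_scaling (by positivity) (by positivity) a n)
          (Fin.forall_fin_two.mpr ⟨hℓ_pos n, hℓ_pos (n + 1)⟩)
          (mem_trapRegion_le_one (by linarith [hℓ n]) hQ i)
    _ ≤ max (ℓ₁ / ℓ₂) (ℓ₂ / ℓ₁) := by
        fin_cases i <;> fin_cases j <;> exact ellAt_div_ellAt_le (by positivity) (by positivity) _ _

/-- For `ℓ₁, ℓ₂ ∈ [2,∞)` and a bounded sequence of positive integers
`(aₙ)`, every entry of every product `Ā^{∘n} = Ā(n)Ā(n-2)⋯Ā(4)` is uniformly bounded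
above by `max {ℓ₁/ℓ₂, ℓ₂/ℓ₁}`. -/
theorem abar_prod_entries_bounded (ℓ₁ ℓ₂ : ℝ) (h₁ : 2 ≤ ℓ₁) (h₂ : 2 ≤ ℓ₂)
    (a : ℕ → ℕ) (ha_pos : ∀ n, 1 ≤ a n) (A : ℕ) (ha_bdd : ∀ n, a n ≤ A) :
    ∀ n : ℕ, ∀ i j : Fin 2, AbarProd ℓ₁ ℓ₂ a n i j ≤ max (ℓ₁ / ℓ₂) (ℓ₂ / ℓ₁) :=
  abar_prod_entries_bounded_general ℓ₁ ℓ₂ h₁ h₂ a ha_pos
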